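/- arXiv:2505.00711 — 5 statements merged into one kernel-verified Lean document; each statement's English description precedes it below -/
import Mathlib

section
/- Let f be square-integrable on (0,1)^d with the uniform probability measure, and suppose the difference quotients D_{z,i}f(v_i,z) = (f(v_{{i}}, z_{-{i}}) - f(z))/(v_i - z_i) are square-integrable. Define C_gas = E[E[(D_z f)(D_z f)^T | z]] with eigendecomposition C_gas = U Λ U^T, eigenvalues λ_1 ≥ ... ≥ λ_d ≥ 0, and global activity scores γ_i(m) = Σ_{j=1}^m λ_j u_{ij}^2. Then the upper Sobol' index satisfies S̄_i ≤ γ_i(d) / (2σ²) for all i = 1,...,d, where σ² = Var(f). -/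
open MeasureTheory Matrix Finset

/-!
On the unit cube `|vᵢ - zᵢ| ≤ 1`, so `(f z - f (vᵢ, z₋ᵢ))² = (D_{z,i} f)² (vᵢ - zᵢ)² ≤ (D_{z,i} f)²`.
Integrating, `2σ² S̄ᵢ ≤ E[(D_{z,i} f)²] = (C_gas)ᵢᵢ`, and the diagonal of `U Λ Uᵀ` is
`∑ⱼ λⱼ uᵢⱼ² = γᵢ(d)`.
-/

theorem Matrix.mul_diagonal_mul_transpose_apply_self {n R : Type*} [Fintype n] [DecidableEq n]
    [CommSemiring R] (U : Matrix n n R) (lam : n → R) (i : n) :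
    (U * diagonal lam * Uᵀ) i i = ∑ j, lam j * U i j ^ 2 := by
  rw [mul_apply]
  simp only [mul_diagonal, transpose_apply]
  exact Finset.sum_congr rfl fun j _ => by ring

section DiffQuot

variable {ι : Type*} [DecidableEq ι]

/-- The paper's `D_{z,i} f (vᵢ, z)`. -/
noncomputable def diffQuot (f : (ι → ℝ) → ℝ) (i : ι) (z v : ι → ℝ) : ℝ :=
  (f (Function.update z i (v i)) - f z) / (v i - z i)

variable (f : (ι → ℝ) → ℝ) (i : ι)

theorem sq_sub_update_eq_diffQuot_sq_mul (z v : ι → ℝ) :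
    (f z - f (Function.update z i (v i))) ^ 2 = diffQuot f i z v ^ 2 * (v i - z i) ^ 2 := by
  by_cases hvz : v i = z i
  · simp [hvz]
  · rw [diffQuot, div_pow, div_mul_cancel₀ _ (pow_ne_zero 2 (sub_ne_zero.2 hvz))]
    ring

theorem sq_sub_update_le_diffQuot_sq {z v : ι → ℝ} (h : |v i - z i| ≤ 1) :
    (f z - f (Function.update z i (v i))) ^ 2 ≤ diffQuot f i z v ^ 2 := by
  rw [sq_sub_update_eq_diffQuot_sq_mul]
  exact mul_le_of_le_one_right (sq_nonneg _) ((sq_le_one_iff_abs_le_one _).2 h)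

theorem integral_integral_sq_sub_update_le {μ ν : Measure (ι → ℝ)} [SFinite μ] [SFinite ν]
    (hμ : ∀ᵐ z ∂μ, z i ∈ Set.Icc (0 : ℝ) 1) (hν : ∀ᵐ v ∂ν, v i ∈ Set.Icc (0 : ℝ) 1)
    (hD : MemLp (fun p : (ι → ℝ) × (ι → ℝ) => diffQuot f i p.1 p.2) 2 (μ.prod ν)) :
    ∫ z, ∫ v, (f z - f (Function.update z i (v i))) ^ 2 ∂ν ∂μ
      ≤ ∫ z, ∫ v, diffQuot f i z v ^ 2 ∂ν ∂μ := by
  have hH : Integrable (fun p : (ι → ℝ) × (ι → ℝ) => diffQuot f i p.1 p.2 ^ 2) (μ.prod ν) :=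
    hD.integrable_sq
  have hle : ∀ᵐ p ∂μ.prod ν,
      (f p.1 - f (Function.update p.1 i (p.2 i))) ^ 2 ≤ diffQuot f i p.1 p.2 ^ 2 := by
    filter_upwards [Measure.quasiMeasurePreserving_fst.ae hμ,
      Measure.quasiMeasurePreserving_snd.ae hν] with p hz hv
    exact sq_sub_update_le_diffQuot_sq f i
      (abs_sub_le_iff.2 ⟨by linarith [hv.2, hz.1], by linarith [hz.2, hv.1]⟩)
  have hG : Integrable (fun p : (ι → ℝ) × (ι → ℝ) =>
      (f p.1 - f (Function.update p.1 i (p.2 i))) ^ 2) (μ.prod ν) := by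
    refine hH.mono' ?_ (hle.mono fun p hp => by rwa [Real.norm_of_nonneg (sq_nonneg _)])
    -- `f` itself is not assumed measurable; measurability comes from the difference quotient.
    simp_rw [sq_sub_update_eq_diffQuot_sq_mul]
    exact hH.aestronglyMeasurable.mul
      ((((measurable_pi_apply i).comp measurable_snd).sub
        ((measurable_pi_apply i).comp measurable_fst)).pow_const 2).aestronglyMeasurable
  calc ∫ z, ∫ v, (f z - f (Function.update z i (v i))) ^ 2 ∂ν ∂μ
      = ∫ p, (f p.1 - f (Function.update p.1 i (p.2 i))) ^ 2 ∂μ.prod ν := integral_integral hG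
    _ ≤ ∫ p, diffQuot f i p.1 p.2 ^ 2 ∂μ.prod ν := integral_mono_ae hG hH hle
    _ = ∫ z, ∫ v, diffQuot f i z v ^ 2 ∂ν ∂μ :=
      (integral_integral (f := fun z v => diffQuot f i z v ^ 2) hH).symm

end DiffQuot

theorem stmt_0_general {d : ℕ} (f : (Fin d → ℝ) → ℝ)
    (μ : Measure (Fin d → ℝ))
    (hμ : μ = Measure.pi fun _ : Fin d => volume.restrict (Set.Ioo (0:ℝ) 1))
    (hD : ∀ i : Fin d, MemLp (fun p : (Fin d → ℝ) × (Fin d → ℝ) =>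
      (f (Function.update p.1 i (p.2 i)) - f p.1) / (p.2 i - p.1 i)) 2 (μ.prod μ))
    (C U : Matrix (Fin d) (Fin d) ℝ) (lam : Fin d → ℝ)
    (hC : ∀ i j, C i j = ∫ z, (∫ v,
      ((f (Function.update z i (v i)) - f z) / (v i - z i)) *
      ((f (Function.update z j (v j)) - f z) / (v j - z j)) ∂μ) ∂μ)
    (hdecomp : C = U * diagonal lam * Uᵀ)
    (σ2 : ℝ)
    (hσpos : 0 < σ2)
    (i : Fin d) :
    (1 / (2 * σ2)) * ∫ z, (∫ v, (f z - f (Function.update z i (v i)))^2 ∂μ) ∂μ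
      ≤ (∑ j, lam j * (U i j)^2) / (2 * σ2) := by
  have : SFinite μ := hμ ▸ inferInstance
  have hcube : ∀ᵐ z ∂μ, z i ∈ Set.Icc (0 : ℝ) 1 :=
    hμ ▸ ((Measure.tendsto_eval_ae_ae (i := i)).eventually (ae_restrict_mem measurableSet_Ioo)).mono
      fun _ h => Set.Ioo_subset_Icc_self h
  have hCii : ∫ z, ∫ v, diffQuot f i z v ^ 2 ∂μ ∂μ = ∑ j, lam j * U i j ^ 2 := by
    rw [← mul_diagonal_mul_transpose_apply_self, ← hdecomp, hC]
    simp only [diffQuot, sq]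
  rw [one_div_mul_eq_div, ← hCii]
  exact div_le_div_of_nonneg_right (integral_integral_sq_sub_update_le f i hcube hcube (hD i))
    (by positivity)

/-- Global activity score bound for the upper Sobol' index on the unit cube:
`S̄ᵢ ≤ γᵢ(d) / (2σ²)`. -/
theorem stmt_0 {d : ℕ} (f : (Fin d → ℝ) → ℝ)
    (μ : Measure (Fin d → ℝ))
    (hμ : μ = Measure.pi fun _ : Fin d => volume.restrict (Set.Ioo (0:ℝ) 1))
    (hf : MemLp f 2 μ)
    (hD : ∀ i : Fin d, MemLp (fun p : (Fin d → ℝ) × (Fin d → ℝ) =>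
      (f (Function.update p.1 i (p.2 i)) - f p.1) / (p.2 i - p.1 i)) 2 (μ.prod μ))
    (C U : Matrix (Fin d) (Fin d) ℝ) (lam : Fin d → ℝ)
    (hC : ∀ i j, C i j = ∫ z, (∫ v,
      ((f (Function.update z i (v i)) - f z) / (v i - z i)) *
      ((f (Function.update z j (v j)) - f z) / (v j - z j)) ∂μ) ∂μ)
    (hU : Uᵀ * U = 1)
    (hdecomp : C = U * diagonal lam * Uᵀ)
    (hmono : ∀ i j : Fin d, i ≤ j → lam j ≤ lam i)
    (hnonneg : ∀ j, 0 ≤ lam j)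
    (σ2 : ℝ) (hσ : σ2 = (∫ z, (f z)^2 ∂μ) - (∫ z, f z ∂μ)^2)
    (hσpos : 0 < σ2)
    (i : Fin d) :
    (1 / (2 * σ2)) * ∫ z, (∫ v, (f z - f (Function.update z i (v i)))^2 ∂μ) ∂μ
      ≤ (∑ j, lam j * (U i j)^2) / (2 * σ2) :=
  stmt_0_general f μ hμ hD C U lam hC hdecomp σ2 hσpos i
end

section
/- Let z = (z_1,...,z_d) have the d-dimensional standard normal distribution and let f(z) = (1/2) z^T A z + b^T z for a symmetric d×d real matrix A and b ∈ ℝ^d. Then the upper Sobol' index equals the global activity score ratio exactly: S̄_i = γ_i(d)/σ² for all i = 1,...,d, where γ_i(d) is the i-th diagonal entry of C_gas and σ² = Var(f(z)). -/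
open MeasureTheory Matrix ProbabilityTheory

/-!
Write `w` for `z` with its `i`-th coordinate set to `0`. Along coordinate `i` the quadratic `f` is
`f (update z i x) = f w + a x + β x²` with `β = Aᵢᵢ / 2` and `a` depending on `w` only, so the
difference `D = f z - f (update z i vᵢ)` factors as `(zᵢ - vᵢ) (a + β (zᵢ + vᵢ))`. For fixed `z`,
the Gaussian moments up to order four give `E_v[D²] = 2 E_v[(D / (zᵢ - vᵢ))²] + r`, where `r` is a
sum of mean-zero polynomials in `zᵢ`, each multiplied by a function of `w`. As `zᵢ` is independent
of `w`, `r` integrates to zero, so `E[D²] = 2 E[(D / (zᵢ - vᵢ))²]`.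
-/

open Function Real

lemma integrable_pow_gaussianReal (μ : ℝ) (v : NNReal) (n : ℕ) :
    Integrable (fun x : ℝ => x ^ n) (gaussianReal μ v) := by
  have := (memLp_id_gaussianReal (μ := μ) (v := v) n).integrable_norm_pow'
  exact (integrable_norm_iff (by fun_prop)).1 (by simpa [norm_pow] using this)

lemma hasDerivAt_gaussianPDFReal_zero_one (x : ℝ) :
    HasDerivAt (gaussianPDFReal 0 1) (-x * gaussianPDFReal 0 1 x) x := by
  have h : HasDerivAt (fun y : ℝ => -y ^ 2 / 2) (-x) x :=
    ((hasDerivAt_pow 2 x).fun_neg.div_const 2).congr_deriv (by ring)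
  rw [show gaussianPDFReal 0 1 = fun y => (√(2 * π))⁻¹ * rexp (-y ^ 2 / 2) from
    funext fun y => by simp [gaussianPDFReal]]
  exact (h.exp.const_mul (√(2 * π))⁻¹).congr_deriv (by ring)

lemma integrable_pow_mul_gaussianPDFReal (n : ℕ) :
    Integrable (fun x => x ^ n * gaussianPDFReal 0 1 x) := by
  have := integrable_pow_gaussianReal 0 1 n
  rw [gaussianReal_of_var_ne_zero _ one_ne_zero, gaussianPDF_def,
    integrable_withDensity_iff_integrable_smul' (by fun_prop) (by simp)] at this
  refine this.congr (ae_of_all _ fun x => ?_)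
  simp [ENNReal.toReal_ofReal (gaussianPDFReal_nonneg 0 1 x), mul_comm]

/-- Stein's identity for `x ^ (n + 1)`: integrate by parts against `φ' = -x φ`. -/
lemma integral_pow_add_two_gaussianReal (n : ℕ) :
    ∫ x, x ^ (n + 2) ∂gaussianReal 0 1 = (n + 1) * ∫ x, x ^ n ∂gaussianReal 0 1 := by
  simp only [integral_gaussianReal_eq_integral_smul one_ne_zero, smul_eq_mul]
  have ibp := integral_mul_deriv_eq_deriv_mul_of_integrable
    (u := fun x => x ^ (n + 1)) (v := fun x => -gaussianPDFReal 0 1 x)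
    (u' := fun x => (n + 1 : ℝ) * x ^ n) (v' := fun x => x * gaussianPDFReal 0 1 x)
    (fun x _ => by simpa using hasDerivAt_pow (n + 1) x)
    (fun x _ => (hasDerivAt_gaussianPDFReal_zero_one x).fun_neg.congr_deriv (by ring))
    ((integrable_pow_mul_gaussianPDFReal (n + 2)).congr (ae_of_all _ fun x => by
      simp only [Pi.mul_apply]; ring))
    (((integrable_pow_mul_gaussianPDFReal n).const_mul (-(n + 1))).congr (ae_of_all _ fun x => by
      simp only [Pi.mul_apply]; ring))
    ((integrable_pow_mul_gaussianPDFReal (n + 1)).neg.congr (ae_of_all _ fun x => by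
      simp only [Pi.neg_apply, Pi.mul_apply, mul_neg]))
  rw [← integral_const_mul]
  convert ibp using 1
  · congr 1 with x; ring
  · rw [← integral_neg]; congr 1 with x; ring

lemma integrable_quartic_gaussianReal {F : ℝ → ℝ} (c₀ c₁ c₂ c₃ c₄ : ℝ)
    (hF : ∀ x, F x = c₀ + c₁ * x + c₂ * x ^ 2 + c₃ * x ^ 3 + c₄ * x ^ 4) :
    Integrable F (gaussianReal 0 1) := by
  have h (c : ℝ) (n : ℕ) := (integrable_pow_gaussianReal 0 1 n).const_mul c
  exact (((((integrable_const c₀).fun_add (by simpa using h c₁ 1)).fun_add (h c₂ 2)).fun_add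
    (h c₃ 3)).fun_add (h c₄ 4)).congr (ae_of_all _ fun x => (hF x).symm)

lemma integral_quartic_gaussianReal {F : ℝ → ℝ} (c₀ c₁ c₂ c₃ c₄ : ℝ)
    (hF : ∀ x, F x = c₀ + c₁ * x + c₂ * x ^ 2 + c₃ * x ^ 3 + c₄ * x ^ 4) :
    ∫ x, F x ∂gaussianReal 0 1 = c₀ + c₂ + 3 * c₄ := by
  have m₁ : ∫ x, x ∂gaussianReal 0 1 = 0 := integral_id_gaussianReal
  have m₂ : ∫ x, x ^ 2 ∂gaussianReal 0 1 = 1 := by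
    simpa using integral_pow_add_two_gaussianReal 0
  have m₃ : ∫ x, x ^ 3 ∂gaussianReal 0 1 = 0 := by
    simpa [m₁] using integral_pow_add_two_gaussianReal 1
  have m₄ : ∫ x, x ^ 4 ∂gaussianReal 0 1 = 3 := by
    rw [integral_pow_add_two_gaussianReal 2, m₂]; norm_num
  have h (c : ℝ) (n : ℕ) := (integrable_pow_gaussianReal 0 1 n).const_mul c
  have h₁ : Integrable (fun x => c₀ + c₁ * x) (gaussianReal 0 1) :=
    (integrable_const c₀).fun_add (by simpa using h c₁ 1)
  have h₂ := h₁.fun_add (h c₂ 2)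
  rw [integral_congr_ae (ae_of_all _ hF), integral_add (h₂.fun_add (h c₃ 3)) (h _ _),
    integral_add h₂ (h _ _), integral_add h₁ (h _ _),
    integral_add (integrable_const _) (by simpa using h c₁ 1), integral_const_mul c₁ fun x => x]
  simp only [integral_const_mul, m₁, m₂, m₃, m₄, integral_const, probReal_univ, smul_eq_mul]
  ring

lemma integral_sq_add_mul_gaussianReal (s α β : ℝ) :
    ∫ t, (α + β * (s + t)) ^ 2 ∂gaussianReal 0 1 = (α + β * s) ^ 2 + β ^ 2 := by
  rw [integral_quartic_gaussianReal ((α + β * s) ^ 2) (2 * (α + β * s) * β) (β ^ 2) 0 0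
    fun t => by ring]
  ring

lemma integral_sq_sub_mul_gaussianReal (s α β : ℝ) :
    ∫ t, ((s - t) * (α + β * (s + t))) ^ 2 ∂gaussianReal 0 1
      = 2 * ((α + β * s) ^ 2 + β ^ 2) + ((s ^ 2 - 1) * α ^ 2 + (s ^ 3 - 3 * s) * (2 * β * α)
        + (s ^ 4 - 4 * s ^ 2 + 1) * β ^ 2) := by
  rw [integral_quartic_gaussianReal ((s * (α + β * s)) ^ 2) (-2 * s * (α + β * s) * α)
    (α ^ 2 - 2 * s * (α + β * s) * β) (2 * α * β) (β ^ 2) fun t => by ring]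
  ring

section ProductMeasure

variable {ι : Type*} [Fintype ι] [DecidableEq ι]

lemma indepFun_eval_update {α : Type*} [MeasurableSpace α] {ν : ι → Measure α}
    [∀ j, IsProbabilityMeasure (ν j)] (i : ι) (c : α) :
    IndepFun (fun z : ι → α => z i) (fun z => update z i c) (Measure.pi ν) := by
  have hind := (iIndepFun_pi (μ := ν) (X := fun _ => id) fun _ => aemeasurable_id).indepFun_finset
    {i} {i}ᶜ (by simp) fun j => measurable_pi_apply j
  have hψ : Measurable fun (y : ↥({i}ᶜ : Finset ι) → α) (j : ι) =>
      if h : j ∈ ({i}ᶜ : Finset ι) then y ⟨j, h⟩ else c := by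
    refine measurable_pi_lambda _ fun j => ?_
    split_ifs
    exacts [measurable_pi_apply _, measurable_const]
  convert hind.comp (measurable_pi_apply ⟨i, Finset.mem_singleton_self i⟩) hψ using 1
  · rfl
  · funext z j
    by_cases h : j = i
    · subst h; simp
    · simp [h]

variable {ν : ι → Measure ℝ} [∀ j, IsProbabilityMeasure (ν j)] {i : ι} {p : ℝ → ℝ}
  {h : (ι → ℝ) → ℝ}

lemma indepFun_comp_eval_of_update_invariant (hp : Measurable p) (hh : Measurable h)
    (h_update : ∀ z x, h (update z i x) = h z) :
    IndepFun (fun z => p (z i)) h (Measure.pi ν) := by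
  simpa [comp_def, h_update] using (indepFun_eval_update (ν := ν) i 0).comp hp hh

lemma integral_comp_eval_mul (hp : Measurable p) (hh : Measurable h)
    (h_update : ∀ z x, h (update z i x) = h z) :
    ∫ z, p (z i) * h z ∂Measure.pi ν = (∫ x, p x ∂ν i) * ∫ z, h z ∂Measure.pi ν := by
  rw [← integral_comp_eval (μ := ν) (i := i) hp.aestronglyMeasurable]
  exact (indepFun_comp_eval_of_update_invariant hp hh h_update).integral_mul_eq_mul_integral
    (hp.comp (measurable_pi_apply i)).aestronglyMeasurable hh.aestronglyMeasurable

lemma integral_comp_eval_mul_eq_zero (hp : Measurable p) (hp₀ : ∫ x, p x ∂ν i = 0)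
    (hh : Measurable h) (h_update : ∀ z x, h (update z i x) = h z) :
    ∫ z, p (z i) * h z ∂Measure.pi ν = 0 := by
  rw [integral_comp_eval_mul hp hh h_update, hp₀, zero_mul]

lemma integrable_comp_eval_mul (hp : Measurable p) (hh : Measurable h)
    (h_update : ∀ z x, h (update z i x) = h z) (hp_int : Integrable p (ν i))
    (hh_int : Integrable h (Measure.pi ν)) :
    Integrable (fun z => p (z i) * h z) (Measure.pi ν) :=
  (indepFun_comp_eval_of_update_invariant hp hh h_update).integrable_mul
    (integrable_comp_eval hp_int) hh_int

end ProductMeasure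

section StandardGaussian

variable {ι : Type*} [Fintype ι] [DecidableEq ι] {i : ι} {a : (ι → ℝ) → ℝ} {β : ℝ}

/-- Each summand is a polynomial in `z i` with Gaussian mean zero times a function that does not
depend on `z i`. -/
lemma integral_two_mul_add_correction (ha : Measurable a)
    (ha_update : ∀ z x, a (update z i x) = a z)
    (ha_memLp : MemLp a 2 (Measure.pi fun _ => gaussianReal 0 1)) {G : (ι → ℝ) → ℝ}
    (hG : Integrable G (Measure.pi fun _ => gaussianReal 0 1)) :
    ∫ z, (2 * G z + ((z i ^ 2 - 1) * a z ^ 2 + (z i ^ 3 - 3 * z i) * (2 * β * a z)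
        + (z i ^ 4 - 4 * z i ^ 2 + 1) * β ^ 2)) ∂Measure.pi (fun _ => gaussianReal 0 1)
      = 2 * ∫ z, G z ∂Measure.pi (fun _ => gaussianReal 0 1) := by
  have ha_sq_update (z : ι → ℝ) (x : ℝ) : a (update z i x) ^ 2 = a z ^ 2 := by rw [ha_update]
  have ha_mul_update (z : ι → ℝ) (x : ℝ) : 2 * β * a (update z i x) = 2 * β * a z := by
    rw [ha_update]
  have h₂ := integrable_comp_eval_mul (p := fun s => s ^ 2 - 1) (by fun_prop) (ha.pow_const 2)
    ha_sq_update (integrable_quartic_gaussianReal (-1) 0 1 0 0 fun x => by ring)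
    ha_memLp.integrable_sq
  have h₃ := integrable_comp_eval_mul (p := fun s => s ^ 3 - 3 * s) (by fun_prop)
    (ha.const_mul (2 * β)) ha_mul_update
    (integrable_quartic_gaussianReal 0 (-3) 0 1 0 fun x => by ring)
    ((ha_memLp.integrable one_le_two).const_mul (2 * β))
  have h₄ := integrable_comp_eval_mul (ν := fun _ => gaussianReal 0 1) (i := i)
    (p := fun s => s ^ 4 - 4 * s ^ 2 + 1) (h := fun _ => β ^ 2) (by fun_prop) measurable_const
    (fun _ _ => rfl) (integrable_quartic_gaussianReal 1 0 (-4) 0 1 fun x => by ring)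
    (integrable_const _)
  rw [integral_add (hG.const_mul 2) ((h₂.fun_add h₃).fun_add h₄),
    integral_add (h₂.fun_add h₃) h₄, integral_add h₂ h₃, integral_const_mul,
    integral_comp_eval_mul_eq_zero (p := fun s => s ^ 2 - 1) (h := fun z => a z ^ 2)
      (by fun_prop)
      ((integral_quartic_gaussianReal (-1) 0 1 0 0 fun x => by ring).trans (by norm_num))
      (ha.pow_const 2) ha_sq_update,
    integral_comp_eval_mul_eq_zero (p := fun s => s ^ 3 - 3 * s) (h := fun z => 2 * β * a z)
      (by fun_prop)
      ((integral_quartic_gaussianReal 0 (-3) 0 1 0 fun x => by ring).trans (by norm_num))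
      (ha.const_mul _) ha_mul_update,
    integral_comp_eval_mul_eq_zero (ν := fun _ => gaussianReal 0 1) (i := i)
      (p := fun s => s ^ 4 - 4 * s ^ 2 + 1) (h := fun _ => β ^ 2) (by fun_prop)
      ((integral_quartic_gaussianReal 1 0 (-4) 0 1 fun x => by ring).trans (by norm_num))
      measurable_const (fun _ _ => rfl)]
  ring

theorem integral_sq_sub_update_eq_two_mul_integral_sq_div {f : (ι → ℝ) → ℝ}
    (hf : ∀ z x, f (update z i x) = f (update z i 0) + a z * x + β * x ^ 2)
    (ha : Measurable a) (ha_update : ∀ z x, a (update z i x) = a z)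
    (ha_memLp : MemLp a 2 (Measure.pi fun _ => gaussianReal 0 1)) :
    ∫ z, ∫ v, (f z - f (update z i (v i))) ^ 2 ∂Measure.pi (fun _ => gaussianReal 0 1)
        ∂Measure.pi (fun _ => gaussianReal 0 1)
      = 2 * ∫ z, ∫ v, ((f z - f (update z i (v i))) / (z i - v i)) ^ 2
        ∂Measure.pi (fun _ => gaussianReal 0 1) ∂Measure.pi (fun _ => gaussianReal 0 1) := by
  set μ := Measure.pi fun _ : ι => gaussianReal 0 1
  have hdiff (z : ι → ℝ) (t : ℝ) :
      f z - f (update z i t) = (z i - t) * (a z + β * (z i + t)) := by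
    have hz := hf z (z i)
    rw [update_eq_self] at hz
    rw [hz, hf z t]
    ring
  have hsq (z : ι → ℝ) : ∫ v, (f z - f (update z i (v i))) ^ 2 ∂μ
      = 2 * ((a z + β * z i) ^ 2 + β ^ 2) + ((z i ^ 2 - 1) * a z ^ 2
        + (z i ^ 3 - 3 * z i) * (2 * β * a z) + (z i ^ 4 - 4 * z i ^ 2 + 1) * β ^ 2) := by
    simp_rw [hdiff]
    rw [integral_comp_eval (μ := fun _ => gaussianReal 0 1) (i := i)
      (f := fun t : ℝ => ((z i - t) * (a z + β * (z i + t))) ^ 2) (by fun_prop)]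
    exact integral_sq_sub_mul_gaussianReal _ _ _
  have hdiv (z : ι → ℝ) : ∫ v, ((f z - f (update z i (v i))) / (z i - v i)) ^ 2 ∂μ
      = (a z + β * z i) ^ 2 + β ^ 2 := by
    simp_rw [hdiff]
    rw [integral_comp_eval (μ := fun _ => gaussianReal 0 1) (i := i)
      (f := fun t : ℝ => ((z i - t) * (a z + β * (z i + t)) / (z i - t)) ^ 2)
      (by fun_prop : Measurable _).aestronglyMeasurable,
      ← integral_sq_add_mul_gaussianReal (z i) (a z) β]
    have := nullSingletonClass_gaussianReal (μ := 0) one_ne_zero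
    refine integral_congr_ae ((Measure.ae_ne _ (z i)).mono fun t ht => ?_)
    dsimp only
    rw [mul_div_cancel_left₀ _ (sub_ne_zero.2 ht.symm)]
  have hzi : MemLp (fun z => z i) 2 μ :=
    (memLp_id_gaussianReal 2).comp_measurePreserving (measurePreserving_eval _ i)
  simp_rw [hsq, hdiv]
  exact integral_two_mul_add_correction ha ha_update ha_memLp
    ((ha_memLp.add (hzi.const_mul β)).integrable_sq.add (integrable_const _))

lemma quadratic_update (A : Matrix ι ι ℝ) (b z : ι → ℝ) (x : ℝ) :
    1 / 2 * (update z i x ⬝ᵥ (A *ᵥ update z i x)) + b ⬝ᵥ update z i x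
      = (1 / 2 * (update z i 0 ⬝ᵥ (A *ᵥ update z i 0)) + b ⬝ᵥ update z i 0)
        + (((A + Aᵀ) *ᵥ update z i 0) i / 2 + b i) * x + A i i / 2 * x ^ 2 := by
  have hsplit : update z i x = update z i 0 + Pi.single i x := by
    ext j
    by_cases h : j = i
    · subst h; simp
    · simp [h]
  rw [hsplit]
  set w := update z i 0
  have hcross : w ⬝ᵥ (A *ᵥ Pi.single i x) = x * (Aᵀ *ᵥ w) i := by
    rw [dotProduct_mulVec, dotProduct_single, mulVec_transpose, mul_comm]
  rw [mulVec_add, dotProduct_add, add_dotProduct, add_dotProduct, add_mulVec, dotProduct_add,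
    hcross, dotProduct_single]
  simp only [single_dotProduct, mulVec_single, Pi.add_apply, Pi.smul_apply, op_smul_eq_mul,
    col_apply]
  ring

lemma memLp_mulVec_update_apply (M : Matrix ι ι ℝ) (k : ι) :
    MemLp (fun z => (M *ᵥ update z i 0) k) 2 (Measure.pi fun _ => gaussianReal 0 1) := by
  simp only [mulVec, dotProduct]
  refine memLp_finsetSum _ fun j _ => MemLp.const_mul ?_ _
  rcases eq_or_ne j i with rfl | hj
  · simp
  · simpa [update_of_ne hj] using (memLp_id_gaussianReal 2).comp_measurePreserving
      (measurePreserving_eval (fun _ : ι => gaussianReal 0 1) j)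

end StandardGaussian

theorem stmt_6_general {d : ℕ} (A : Matrix (Fin d) (Fin d) ℝ) (b : Fin d → ℝ)
    (f : (Fin d → ℝ) → ℝ)
    (hf : ∀ z, f z = (1/2) * (z ⬝ᵥ (A *ᵥ z)) + b ⬝ᵥ z)
    (μ : Measure (Fin d → ℝ))
    (hμ : μ = Measure.pi fun _ : Fin d => gaussianReal 0 1)
    (σ2 : ℝ)
    (i : Fin d) :
    (1 / (2 * σ2)) * ∫ z, (∫ v, (f z - f (Function.update z i (v i)))^2 ∂μ) ∂μ
      = (∫ z, (∫ v, ((f z - f (Function.update z i (v i))) / (z i - v i))^2 ∂μ) ∂μ) / σ2 := by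
  subst hμ
  rw [integral_sq_sub_update_eq_two_mul_integral_sq_div (i := i) (β := A i i / 2)
    (a := fun z => ((A + Aᵀ) *ᵥ update z i 0) i / 2 + b i)
    (fun z x => by simp only [hf]; exact quadratic_update A b z x) (by fun_prop)
    (fun z x => by simp)
    (((memLp_mulVec_update_apply (i := i) (A + Aᵀ) i).mul_const 2⁻¹).add (memLp_const _))]
  ring

/-- For a quadratic function under the standard Gaussian, the upper Sobol' index equals
`γᵢ(d)/σ²` exactly. -/
theorem stmt_6 {d : ℕ} (A : Matrix (Fin d) (Fin d) ℝ) (b : Fin d → ℝ)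
    (hA : A.IsSymm)
    (f : (Fin d → ℝ) → ℝ)
    (hf : ∀ z, f z = (1/2) * (z ⬝ᵥ (A *ᵥ z)) + b ⬝ᵥ z)
    (μ : Measure (Fin d → ℝ))
    (hμ : μ = Measure.pi fun _ : Fin d => gaussianReal 0 1)
    (σ2 : ℝ) (hσ : σ2 = (∫ z, (f z)^2 ∂μ) - (∫ z, f z ∂μ)^2)
    (hσpos : 0 < σ2)
    (i : Fin d) :
    (1 / (2 * σ2)) * ∫ z, (∫ v, (f z - f (Function.update z i (v i)))^2 ∂μ) ∂μ
      = (∫ z, (∫ v, ((f z - f (Function.update z i (v i))) / (z i - v i))^2 ∂μ) ∂μ) / σ2 :=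
  stmt_6_general A b f hf μ hμ σ2 i
end

section
/- Let f be square-integrable on (0,1)^d with ANOVA decomposition. Then the upper Sobol' index admits the double-integral representation: S̄_i = (1/(2σ²)) ∫_{(0,1)^d} ∫_0^1 (f(z) - f(v_{{i}}, z_{-{i}}))² dv_i dz, where S̄_i = (1/σ²) Σ_{u : i ∈ u} σ_u². -/
/-!
Let `g = ∑_{u ∋ i} F u`. The remaining components do not depend on `zᵢ`, so
`f z - f (vᵢ, z₋ᵢ) = g z - g (vᵢ, z₋ᵢ)`. Resampling the `i`-th coordinate preserves the product
measure, hence the double integral of the squared difference is `2 ‖g‖² - 2 ⟪g, Eᵢ g⟫`, where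
`Eᵢ g` integrates out `zᵢ`. Every component containing `i` integrates to zero in `zᵢ`, so
`Eᵢ g = 0`, and by orthogonality `‖g‖² = ∑_{u ∋ i} σ_u²`.
-/

open MeasureTheory Finset

theorem MeasureTheory.MeasurePreserving.integral_comp_of_aestronglyMeasurable {α β : Type*}
    [MeasurableSpace α] [MeasurableSpace β] {μ : Measure α} {ν : Measure β} {φ : α → β}
    (hφ : MeasurePreserving φ μ ν) {g : β → ℝ} (hg : AEStronglyMeasurable g ν) :
    ∫ x, g (φ x) ∂μ = ∫ y, g y ∂ν := by
  rw [← hφ.map_eq] at hg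
  rw [← hφ.map_eq, integral_map hφ.measurable.aemeasurable hg]

theorem integral_sq_finsetSum_of_orthogonal {α ι : Type*} [MeasurableSpace α] {μ : Measure α}
    {F : ι → α → ℝ} (s : Finset ι) (hF : ∀ u ∈ s, MemLp (F u) 2 μ)
    (horth : ∀ u ∈ s, ∀ v ∈ s, u ≠ v → ∫ x, F u x * F v x ∂μ = 0) :
    ∫ x, (∑ u ∈ s, F u x) ^ 2 ∂μ = ∑ u ∈ s, ∫ x, F u x ^ 2 ∂μ := by
  have hint : ∀ u ∈ s, ∀ v ∈ s, Integrable (fun x => F u x * F v x) μ := fun u hu v hv =>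
    (hF u hu).integrable_mul (hF v hv)
  simp_rw [sq, sum_mul_sum]
  rw [integral_finsetSum _ fun u hu => integrable_finsetSum _ fun v hv => hint u hu v hv]
  refine sum_congr rfl fun u hu => ?_
  rw [integral_finsetSum _ fun v hv => hint u hu v hv,
    sum_eq_single_of_mem u hu fun v hv hvu => horth u hu v hv hvu.symm]

theorem preimage_update_univ_pi {ι : Type*} [DecidableEq ι] {X : ι → Type*} (i : ι)
    (s : ∀ j, Set (X j)) :
    (fun p : (∀ j, X j) × X i => Function.update p.1 i p.2) ⁻¹' Set.univ.pi s
      = Set.univ.pi (Function.update s i Set.univ) ×ˢ s i := by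
  ext ⟨z, t⟩
  simp only [Set.mem_preimage, Set.mem_pi, Set.mem_univ, true_implies, Set.mem_prod]
  constructor
  · intro h
    refine ⟨fun j => ?_, by simpa using h i⟩
    rcases eq_or_ne j i with rfl | hj
    · simp
    · simpa [hj] using h j
  · rintro ⟨h1, h2⟩ j
    rcases eq_or_ne j i with rfl | hj
    · simpa using h2
    · simpa [hj] using h1 j

section

variable {ι : Type*} [Fintype ι] [DecidableEq ι] {X : ι → Type*} [∀ j, MeasurableSpace (X j)]
  (ν : ∀ j, Measure (X j)) [∀ j, IsProbabilityMeasure (ν j)]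

theorem measurePreserving_update (i : ι) :
    MeasurePreserving (fun p : (∀ j, X j) × X i => Function.update p.1 i p.2)
      ((Measure.pi ν).prod (ν i)) (Measure.pi ν) := by
  refine ⟨measurable_update', (Measure.pi_eq fun s hs => ?_).symm⟩
  rw [Measure.map_apply measurable_update' (.univ_pi hs), preimage_update_univ_pi,
    Measure.prod_prod, Measure.pi_pi, ← prod_erase_mul _ _ (mem_univ i),
    ← prod_erase_mul _ _ (mem_univ i)]
  simp only [Function.update_self, measure_univ, mul_one]
  congr 1
  refine prod_congr rfl fun j hj => ?_
  rw [Function.update_of_ne (ne_of_mem_erase hj)]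

theorem ae_integrable_comp_update (i : ι) {g : (∀ j, X j) → ℝ}
    (hg : Integrable g (Measure.pi ν)) :
    ∀ᵐ z ∂Measure.pi ν, Integrable (fun t => g (Function.update z i t)) (ν i) :=
  ((measurePreserving_update ν i).integrable_comp_of_integrable hg).prod_right_ae

theorem integral_integral_sub_update_sq (i : ι) {g : (∀ j, X j) → ℝ}
    (hg : MemLp g 2 (Measure.pi ν))
    (hg0 : ∀ᵐ z ∂Measure.pi ν, ∫ t, g (Function.update z i t) ∂ν i = 0) :
    ∫ z, ∫ t, (g z - g (Function.update z i t)) ^ 2 ∂ν i ∂Measure.pi ν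
      = 2 * ∫ z, g z ^ 2 ∂Measure.pi ν := by
  set T := fun p : (∀ j, X j) × X i => Function.update p.1 i p.2
  have hT := measurePreserving_update ν i
  have hfst : MeasurePreserving Prod.fst ((Measure.pi ν).prod (ν i)) (Measure.pi ν) :=
    measurePreserving_fst
  have hg1 : MemLp (fun p => g p.1) 2 ((Measure.pi ν).prod (ν i)) :=
    hg.comp_measurePreserving hfst
  have hgT : MemLp (fun p => g (T p)) 2 ((Measure.pi ν).prod (ν i)) :=
    hg.comp_measurePreserving hT
  have hprod : Integrable (fun p => g p.1 * g (T p)) ((Measure.pi ν).prod (ν i)) :=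
    hg1.integrable_mul hgT
  have hcross : ∫ p, g p.1 * g (T p) ∂(Measure.pi ν).prod (ν i) = 0 := by
    rw [integral_prod _ hprod]
    simp_rw [integral_const_mul]
    rw [integral_eq_zero_of_ae (hg0.mono fun z hz => by simp [T, hz])]
  have hsq : ∀ φ : (∀ j, X j) × X i → ∀ j, X j,
      MeasurePreserving φ ((Measure.pi ν).prod (ν i)) (Measure.pi ν) →
      ∫ p, g (φ p) ^ 2 ∂(Measure.pi ν).prod (ν i) = ∫ z, g z ^ 2 ∂Measure.pi ν :=
    fun φ hφ => hφ.integral_comp_of_aestronglyMeasurable (g := fun z => g z ^ 2)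
      hg.integrable_sq.aestronglyMeasurable
  calc ∫ z, ∫ t, (g z - g (Function.update z i t)) ^ 2 ∂ν i ∂Measure.pi ν
      = ∫ p, (g p.1 ^ 2 + g (T p) ^ 2) - 2 * (g p.1 * g (T p)) ∂(Measure.pi ν).prod (ν i) := by
        have hdiff : Integrable (fun p => (g p.1 - g (T p)) ^ 2) ((Measure.pi ν).prod (ν i)) :=
          (hg1.sub hgT).integrable_sq
        rw [← integral_prod _ hdiff]
        congr 1 with p
        ring
    _ = 2 * ∫ z, g z ^ 2 ∂Measure.pi ν := by
        have hsum : Integrable (fun p => g p.1 ^ 2 + g (T p) ^ 2) ((Measure.pi ν).prod (ν i)) :=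
          hg1.integrable_sq.add hgT.integrable_sq
        rw [integral_sub hsum (hprod.const_mul 2),
          integral_add hg1.integrable_sq hgT.integrable_sq, integral_const_mul, hcross,
          hsq _ hfst, hsq _ hT]
        ring

end

theorem stmt_10_general {d : ℕ} (f : (Fin d → ℝ) → ℝ)
    (μ : Measure (Fin d → ℝ))
    (hμ : μ = Measure.pi fun _ : Fin d => volume.restrict (Set.Ioo (0:ℝ) 1))
    (F : Finset (Fin d) → (Fin d → ℝ) → ℝ)
    (hFL2 : ∀ u, MemLp (F u) 2 μ)
    (hdecomp : ∀ z, f z = ∑ u : Finset (Fin d), F u z)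
    (hdep : ∀ u, ∀ z w : Fin d → ℝ, (∀ i ∈ u, z i = w i) → F u z = F u w)
    (hzero : ∀ u, ∀ j ∈ u, ∀ z : Fin d → ℝ,
      (∫ t in Set.Ioo (0:ℝ) 1, F u (Function.update z j t)) = 0)
    (horth : ∀ u v : Finset (Fin d), u ≠ v → (∫ z, F u z * F v z ∂μ) = 0)
    (σ2 : ℝ)
    (i : Fin d) :
    (1 / σ2) * (∑ u ∈ Finset.univ.filter (fun u : Finset (Fin d) => i ∈ u),
        ∫ z, (F u z)^2 ∂μ)
      = (1 / (2 * σ2)) *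
        ∫ z, (∫ t in Set.Ioo (0:ℝ) 1, (f z - f (Function.update z i t))^2) ∂μ := by
  subst hμ
  set ν := volume.restrict (Set.Ioo (0:ℝ) 1)
  have : IsProbabilityMeasure ν := ⟨by simp [ν]⟩
  set S := Finset.univ.filter (fun u : Finset (Fin d) => i ∈ u)
  set g : (Fin d → ℝ) → ℝ := fun z => ∑ u ∈ S, F u z
  have hfg : ∀ z t, f z - f (Function.update z i t) = g z - g (Function.update z i t) := by
    intro z t
    rw [hdecomp, hdecomp, ← sum_filter_add_sum_filter_not univ (i ∈ ·),
      ← sum_filter_add_sum_filter_not univ (i ∈ ·) fun u => F u (Function.update z i t),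
      sum_congr rfl fun u hu => hdep u (Function.update z i t) z fun j hj =>
        Function.update_of_ne (ne_of_mem_of_not_mem hj (mem_filter.1 hu).2) _ _]
    ring
  have hg : MemLp g 2 _ := memLp_finsetSum S fun u _ => hFL2 u
  have hg0 : ∀ᵐ z ∂Measure.pi fun _ => ν, ∫ t, g (Function.update z i t) ∂ν = 0 := by
    filter_upwards [(Filter.eventually_all_finset S).2 fun u _ =>
      ae_integrable_comp_update _ i ((hFL2 u).integrable one_le_two)] with z hz
    rw [integral_finsetSum S hz]
    exact sum_eq_zero fun u hu => hzero u i (mem_filter.1 hu).2 z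
  simp_rw [hfg]
  rw [integral_integral_sub_update_sq _ i hg hg0,
    integral_sq_finsetSum_of_orthogonal S (fun u _ => hFL2 u) fun u _ v _ => horth u v]
  ring

/-- Sobol' pick-freeze identity for the upper (total) index:
`S̄ᵢ = (1/σ²) ∑_{u ∋ i} σ_u² = (1/(2σ²)) ∬ (f(z) - f(vᵢ, z₋ᵢ))² dvᵢ dz`. -/
theorem stmt_10 {d : ℕ} (f : (Fin d → ℝ) → ℝ)
    (μ : Measure (Fin d → ℝ))
    (hμ : μ = Measure.pi fun _ : Fin d => volume.restrict (Set.Ioo (0:ℝ) 1))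
    (hf : MemLp f 2 μ)
    (F : Finset (Fin d) → (Fin d → ℝ) → ℝ)
    (hFL2 : ∀ u, MemLp (F u) 2 μ)
    (hdecomp : ∀ z, f z = ∑ u : Finset (Fin d), F u z)
    (hdep : ∀ u, ∀ z w : Fin d → ℝ, (∀ i ∈ u, z i = w i) → F u z = F u w)
    (hconst : ∀ z, F ∅ z = ∫ x, f x ∂μ)
    (hzero : ∀ u, ∀ j ∈ u, ∀ z : Fin d → ℝ,
      (∫ t in Set.Ioo (0:ℝ) 1, F u (Function.update z j t)) = 0)
    (horth : ∀ u v : Finset (Fin d), u ≠ v → (∫ z, F u z * F v z ∂μ) = 0)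
    (σ2 : ℝ) (hσ : σ2 = (∫ z, (f z)^2 ∂μ) - (∫ z, f z ∂μ)^2)
    (hσpos : 0 < σ2)
    (i : Fin d) :
    (1 / σ2) * (∑ u ∈ Finset.univ.filter (fun u : Finset (Fin d) => i ∈ u),
        ∫ z, (F u z)^2 ∂μ)
      = (1 / (2 * σ2)) *
        ∫ z, (∫ t in Set.Ioo (0:ℝ) 1, (f z - f (Function.update z i t))^2) ∂μ :=
  stmt_10_general f μ hμ F hFL2 hdecomp hdep hzero horth σ2 i
end

section
/- Let f be continuously differentiable on (0,1)^d (uniform measure) with square-integrable gradient, and suppose f is linear in the coordinate x_i when the other coordinates are fixed, i.e. ∂f/∂x_i does not depend on x_i. Then S̄_i = v_i/(12σ²), where v_i = ∫_{(0,1)^d} (∂f/∂x_i)² dx is the derivative-based global sensitivity measure (DGSM) and σ² = Var(f). -/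
/-!
Since `∂f/∂xᵢ` does not depend on `xᵢ`, the mean value theorem along the `i`-th coordinate line
gives `f z - f (update z i t) = ∂ᵢf(z) (zᵢ - t)`, so the inner integral is
`∂ᵢf(z)² (zᵢ² - zᵢ + 1/3)`. Resampling the `i`-th coordinate of a product measure preserves it,
and `∂ᵢf` is invariant under such resampling, so the outer integral factors as
`(∫ ∂ᵢf²) · ∫₀¹ (s² - s + 1/3) ds = vᵢ / 6`.
-/

open MeasureTheory

theorem integral_Ioo_sub_sq (a : ℝ) : ∫ t in Set.Ioo (0:ℝ) 1, (a - t) ^ 2 = a ^ 2 - a + 1 / 3 := by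
  rw [← integral_Ioc_eq_integral_Ioo, ← intervalIntegral.integral_of_le zero_le_one,
    intervalIntegral.integral_comp_sub_left (fun x => x ^ 2), integral_pow]
  ring

theorem integral_Ioo_sq_sub_add : ∫ t in Set.Ioo (0:ℝ) 1, (t ^ 2 - t + 1 / 3) = 1 / 6 := by
  rw [← integral_Ioc_eq_integral_Ioo, ← intervalIntegral.integral_of_le zero_le_one]
  norm_num [integral_pow]

instance isProbabilityMeasure_restrict_Ioo_zero_one :
    IsProbabilityMeasure (volume.restrict (Set.Ioo (0:ℝ) 1)) :=
  ⟨by simp⟩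

section UpdateCoordinate

variable {ι : Type*} [Fintype ι] [DecidableEq ι] {α : ι → Type*} [∀ j, MeasurableSpace (α j)]
  (μ : ∀ j, Measure (α j)) [∀ j, SigmaFinite (μ j)] (i : ι) [IsProbabilityMeasure (μ i)]

theorem measurePreserving_update_prod :
    MeasurePreserving (fun p : (∀ j, α j) × α i => Function.update p.1 i p.2)
      ((Measure.pi μ).prod (μ i)) (Measure.pi μ) := by
  refine ⟨measurable_update', (Measure.pi_eq fun s hs => ?_).symm⟩
  have hpre : (fun p : (∀ j, α j) × α i => Function.update p.1 i p.2) ⁻¹' Set.univ.pi s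
      = Set.univ.pi (Function.update s i Set.univ) ×ˢ s i := by
    ext p
    simp only [Set.mem_preimage, Set.mem_univ_pi, Set.mem_prod, Function.forall_update_iff]
    rw [Function.forall_update_iff s (p := fun j t => p.1 j ∈ t)]
    simp only [Set.mem_univ, true_and]
    exact and_comm
  rw [Measure.map_apply measurable_update' (.univ_pi hs), hpre, Measure.prod_prod, Measure.pi_pi,
    Fintype.prod_eq_mul_prod_compl i, Fintype.prod_eq_mul_prod_compl i (fun j => μ j (s j)),
    Function.update_self, measure_univ, one_mul, mul_comm]
  congr 1
  refine Finset.prod_congr rfl fun j hj => ?_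
  rw [Function.update_of_ne (by simpa using hj)]

theorem integral_eq_integral_integral_update {E : Type*} [NormedAddCommGroup E] [NormedSpace ℝ E]
    {g : (∀ j, α j) → E} (hg : Integrable g (Measure.pi μ)) :
    ∫ z, g z ∂Measure.pi μ = ∫ z, ∫ s, g (Function.update z i s) ∂μ i ∂Measure.pi μ := by
  have hmp := measurePreserving_update_prod μ i
  calc ∫ z, g z ∂Measure.pi μ
      = ∫ p, g (Function.update p.1 i p.2) ∂(Measure.pi μ).prod (μ i) := by
        rw [← integral_map hmp.measurable.aemeasurable (by rw [hmp.map_eq]; exact hg.1),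
          hmp.map_eq]
    _ = _ := integral_prod _ ((hmp.integrable_comp hg.1).2 hg)

theorem integral_mul_comp_eval_of_update_ae_eq {h : (∀ j, α j) → ℝ} {q : α i → ℝ}
    (hint : Integrable (fun z => h z * q (z i)) (Measure.pi μ))
    (hinv : ∀ᵐ z ∂Measure.pi μ, ∀ᵐ s ∂μ i, h (Function.update z i s) = h z) :
    ∫ z, h z * q (z i) ∂Measure.pi μ = (∫ z, h z ∂Measure.pi μ) * ∫ s, q s ∂μ i := by
  rw [integral_eq_integral_integral_update μ i hint, ← integral_mul_const]
  refine integral_congr_ae (hinv.mono fun z hz => ?_)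
  simp only [Function.update_self]
  rw [← integral_const_mul]
  exact integral_congr_ae (hz.mono fun s hs => by simp only [hs])

end UpdateCoordinate

section PartialDerivConst

variable {ι : Type*} [Fintype ι] [DecidableEq ι] {f : (ι → ℝ) → ℝ} {z : ι → ℝ} {i : ι}

theorem apply_sub_apply_update_eq_fderiv_mul {I : Set ℝ} (hI : Convex ℝ I) (hzI : z i ∈ I)
    (hf : ∀ t ∈ I, DifferentiableAt ℝ f (Function.update z i t))
    (hlin : ∀ t ∈ I, fderiv ℝ f (Function.update z i t) (Pi.single i 1) =
      fderiv ℝ f z (Pi.single i 1))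
    {t : ℝ} (ht : t ∈ I) :
    f z - f (Function.update z i t) = fderiv ℝ f z (Pi.single i 1) * (z i - t) := by
  set c := fderiv ℝ f z (Pi.single i 1)
  have hderiv : ∀ s ∈ I, HasDerivWithinAt (fun s => f (Function.update z i s) - c * s) 0 I s := by
    intro s hs
    have := ((hf s hs).hasFDerivAt.comp_hasDerivAt s (hasDerivAt_update z i s)).sub
      ((hasDerivAt_id s).const_mul c)
    rw [hlin s hs, mul_one, sub_self] at this
    exact this.hasDerivWithinAt
  have := hI.norm_image_sub_le_of_norm_hasDerivWithin_le hderiv (fun _ _ => le_of_eq norm_zero)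
    hzI ht
  rw [zero_mul, norm_le_zero_iff, Function.update_eq_self] at this
  linarith

theorem integral_Ioo_sq_sub_apply_update (hzi : z i ∈ Set.Ioo (0:ℝ) 1)
    (hf : ∀ t ∈ Set.Ioo (0:ℝ) 1, DifferentiableAt ℝ f (Function.update z i t))
    (hlin : ∀ t ∈ Set.Ioo (0:ℝ) 1, fderiv ℝ f (Function.update z i t) (Pi.single i 1) =
      fderiv ℝ f z (Pi.single i 1)) :
    ∫ t in Set.Ioo (0:ℝ) 1, (f z - f (Function.update z i t)) ^ 2 =
      fderiv ℝ f z (Pi.single i 1) ^ 2 * (z i ^ 2 - z i + 1 / 3) := by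
  rw [setIntegral_congr_fun measurableSet_Ioo fun t ht => by
      rw [apply_sub_apply_update_eq_fderiv_mul (convex_Ioo 0 1) hzi hf hlin ht, mul_pow],
    integral_const_mul, integral_Ioo_sub_sq]

end PartialDerivConst

theorem stmt_11_general {d : ℕ} (f : (Fin d → ℝ) → ℝ)
    (μ : Measure (Fin d → ℝ))
    (hμ : μ = Measure.pi fun _ : Fin d => volume.restrict (Set.Ioo (0:ℝ) 1))
    (hsmooth : ContDiffOn ℝ 1 f (Set.univ.pi fun _ : Fin d => Set.Ioo (0:ℝ) 1))
    (hgrad : ∀ j : Fin d, MemLp (fun z => fderiv ℝ f z (Pi.single j 1)) 2 μ)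
    (i : Fin d)
    (hlin : ∀ z ∈ (Set.univ.pi fun _ : Fin d => Set.Ioo (0:ℝ) 1), ∀ t ∈ Set.Ioo (0:ℝ) 1,
      fderiv ℝ f (Function.update z i t) (Pi.single i 1) = fderiv ℝ f z (Pi.single i 1))
    (σ2 vi : ℝ)
    (hv : vi = ∫ z, (fderiv ℝ f z (Pi.single i 1))^2 ∂μ) :
    (1 / (2 * σ2)) * ∫ z, (∫ t in Set.Ioo (0:ℝ) 1, (f z - f (Function.update z i t))^2) ∂μ
      = vi / (12 * σ2) := by
  set cube := Set.univ.pi fun _ : Fin d => Set.Ioo (0:ℝ) 1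
  set D := fun z => fderiv ℝ f z (Pi.single i 1)
  have hcube : ∀ᵐ z ∂μ, z ∈ cube := by
    simp only [hμ, cube, Set.mem_univ_pi]
    exact ae_all_iff.2 fun j => Measure.tendsto_eval_ae_ae.eventually
      (ae_restrict_mem measurableSet_Ioo)
  have hdiff : ∀ x ∈ cube, DifferentiableAt ℝ f x := fun x hx =>
    (hsmooth.differentiableOn one_ne_zero).differentiableAt
      ((isOpen_set_pi Set.finite_univ fun _ _ => isOpen_Ioo).mem_nhds hx)
  have hinner (z) (hz : z ∈ cube) := integral_Ioo_sq_sub_apply_update (hz i trivial)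
    (fun t ht => hdiff _ ((Set.update_mem_pi_iff_of_mem hz).2 fun _ => ht)) (hlin z hz)
  have hint : Integrable (fun z => D z ^ 2 * (z i ^ 2 - z i + 1 / 3)) μ := by
    refine (hgrad i).integrable_sq.mul_bdd (c := 1 / 3) (by fun_prop) ?_
    filter_upwards [hcube] with z hz
    obtain ⟨h0, h1⟩ := hz i trivial
    rw [Real.norm_eq_abs, abs_le]
    constructor <;> nlinarith
  have hinv : ∀ᵐ z ∂μ, ∀ᵐ s ∂volume.restrict (Set.Ioo (0:ℝ) 1),
      D (Function.update z i s) ^ 2 = D z ^ 2 := by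
    filter_upwards [hcube] with z hz
    filter_upwards [ae_restrict_mem measurableSet_Ioo] with s hs
    simp only [D, hlin z hz s hs]
  subst hμ
  rw [integral_congr_ae (hcube.mono hinner),
    integral_mul_comp_eval_of_update_ae_eq _ i (h := fun z => D z ^ 2)
      (q := fun a => a ^ 2 - a + 1 / 3) hint hinv, integral_Ioo_sq_sub_add, ← hv]
  ring

/-- If `f` is C¹ on the unit cube and linear in coordinate `i` (its `i`-th partial
derivative does not depend on `xᵢ`), then `S̄ᵢ = vᵢ/(12σ²)`. -/
theorem stmt_11 {d : ℕ} (f : (Fin d → ℝ) → ℝ)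
    (μ : Measure (Fin d → ℝ))
    (hμ : μ = Measure.pi fun _ : Fin d => volume.restrict (Set.Ioo (0:ℝ) 1))
    (hsmooth : ContDiffOn ℝ 1 f (Set.univ.pi fun _ : Fin d => Set.Ioo (0:ℝ) 1))
    (hgrad : ∀ j : Fin d, MemLp (fun z => fderiv ℝ f z (Pi.single j 1)) 2 μ)
    (i : Fin d)
    (hlin : ∀ z ∈ (Set.univ.pi fun _ : Fin d => Set.Ioo (0:ℝ) 1), ∀ t ∈ Set.Ioo (0:ℝ) 1,
      fderiv ℝ f (Function.update z i t) (Pi.single i 1) = fderiv ℝ f z (Pi.single i 1))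
    (σ2 vi : ℝ)
    (hσ : σ2 = (∫ z, (f z)^2 ∂μ) - (∫ z, f z ∂μ)^2)
    (hσpos : 0 < σ2)
    (hv : vi = ∫ z, (fderiv ℝ f z (Pi.single i 1))^2 ∂μ) :
    (1 / (2 * σ2)) * ∫ z, (∫ t in Set.Ioo (0:ℝ) 1, (f z - f (Function.update z i t))^2) ∂μ
      = vi / (12 * σ2) :=
  stmt_11_general f μ hμ hsmooth hgrad i hlin σ2 vi hv
end

section
/- Let f be continuously differentiable on (0,1)^d with square-integrable partial derivatives, uniform measure, σ² = Var(f) > 0. Then for each i, S̄_i ≤ v_i/(π² σ²), where v_i = ∫_{(0,1)^d} (∂f/∂x_i)² dx. -/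
/-!
Fixing all coordinates but the `i`-th reduces the claim to the one-dimensional Poincaré
inequality in the form `∫∫_{(0,1)²} (g s - g t)² ≤ (2 / π²) ∫₀¹ g'²`, the left side being
`2 Var g`. For `t < s`, Cauchy–Schwarz with the weight `w x = sin (π x)` gives
`(g s - g t)² ≤ (∫ₜˢ w) (∫ₜˢ g'² / w)`. Integrating over `t < s` and exchanging the order of
integration, `g' x ² / w x` ends up weighted by `∫∫_{t < x < s} (∫ₜˢ w) = w x / π²`, which cancels
the `1 / w`. Working with `ℝ≥0∞`-valued integrals avoids all integrability side conditions.
-/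

open MeasureTheory Set Real Function
open scoped ENNReal

theorem ofReal_integral_le_lintegral_ofReal {α : Type*} [MeasurableSpace α]
    {μ : Measure α} (f : α → ℝ) :
    ENNReal.ofReal (∫ a, f a ∂μ) ≤ ∫⁻ a, ENNReal.ofReal (f a) ∂μ := by
  by_cases hf : Integrable f μ
  · refine ENNReal.ofReal_le_of_le_toReal ?_
    rw [integral_eq_lintegral_pos_part_sub_lintegral_neg_part hf]
    exact sub_le_self _ ENNReal.toReal_nonneg
  · simp [integral_undef hf]

theorem lintegral_mul_sq_le {α : Type*} [MeasurableSpace α] {μ : Measure α}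
    {f g : α → ℝ≥0∞} (hf : AEMeasurable f μ) (hg : AEMeasurable g μ) :
    (∫⁻ a, f a * g a ∂μ) ^ 2 ≤ (∫⁻ a, f a ^ 2 ∂μ) * ∫⁻ a, g a ^ 2 ∂μ := by
  have h := ENNReal.lintegral_mul_le_Lp_mul_Lq μ Real.HolderConjugate.two_two hf hg
  calc (∫⁻ a, f a * g a ∂μ) ^ 2
      ≤ ((∫⁻ a, f a ^ (2 : ℝ) ∂μ) ^ (1 / 2 : ℝ) *
          (∫⁻ a, g a ^ (2 : ℝ) ∂μ) ^ (1 / 2 : ℝ)) ^ 2 :=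
        pow_le_pow_left' h 2
    _ = (∫⁻ a, f a ^ 2 ∂μ) * ∫⁻ a, g a ^ 2 ∂μ := by
        simp only [ENNReal.rpow_two, mul_pow, ← ENNReal.rpow_natCast, ← ENNReal.rpow_mul]
        norm_num

theorem lintegral_lintegral_lintegral_swap {α β γ : Type*} [MeasurableSpace α]
    [MeasurableSpace β] [MeasurableSpace γ] {μ : Measure α} {ν : Measure β} {ρ : Measure γ}
    [SFinite μ] [SFinite ν] [SFinite ρ] {H : α → β → γ → ℝ≥0∞}
    (hH : Measurable fun p : α × β × γ => H p.1 p.2.1 p.2.2) :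
    ∫⁻ a, ∫⁻ b, ∫⁻ c, H a b c ∂ρ ∂ν ∂μ = ∫⁻ c, ∫⁻ a, ∫⁻ b, H a b c ∂ν ∂μ ∂ρ := by
  have hinner : ∀ a, ∫⁻ b, ∫⁻ c, H a b c ∂ρ ∂ν = ∫⁻ c, ∫⁻ b, H a b c ∂ν ∂ρ := fun a =>
    lintegral_lintegral_swap (hH.comp measurable_prodMk_left).aemeasurable
  simp_rw [hinner]
  exact lintegral_lintegral_swap (Measurable.lintegral_prod_right'
    (f := fun q : (α × γ) × β => H q.1.1 q.2 q.1.2)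
    (hH.comp (by fun_prop : Measurable fun q : (α × γ) × β => (q.1.1, q.2, q.1.2)))).aemeasurable

theorem setLIntegral_Ioo_ofReal_eq_intervalIntegral {F : ℝ → ℝ} {a b : ℝ} (hab : a ≤ b)
    (hF : ContinuousOn F (Icc a b)) (hF_nonneg : ∀ x ∈ Ioo a b, 0 ≤ F x) :
    ∫⁻ x in Ioo a b, ENNReal.ofReal (F x) = ENNReal.ofReal (∫ x in a..b, F x) := by
  rw [intervalIntegral.integral_of_le hab, integral_Ioc_eq_integral_Ioo,
    ofReal_integral_eq_lintegral_ofReal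
      ((hF.integrableOn_compact isCompact_Icc).mono_set Ioo_subset_Icc_self)
      ((ae_restrict_mem measurableSet_Ioo).mono hF_nonneg)]

theorem ofReal_sq_sub_le_lintegral_mul {g g' w : ℝ → ℝ} {a b : ℝ} (hab : a ≤ b)
    (hg : ∀ x ∈ Icc a b, HasDerivAt g (g' x) x) (hg' : ContinuousOn g' (Icc a b))
    (hw : Measurable w) (hw_pos : ∀ x ∈ Ioo a b, 0 < w x) :
    ENNReal.ofReal ((g b - g a) ^ 2) ≤
      (∫⁻ x in Ioo a b, ENNReal.ofReal (w x)) *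
        ∫⁻ x in Ioo a b, ENNReal.ofReal (g' x ^ 2 / w x) := by
  have hftc : |g b - g a| ≤ ∫ x in a..b, |g' x| := by
    rw [← intervalIntegral.integral_eq_sub_of_hasDerivAt (by rwa [uIcc_of_le hab])
      (hg'.intervalIntegrable_of_Icc hab)]
    exact intervalIntegral.abs_integral_le_integral_abs hab
  have hg'_meas : AEMeasurable g' (volume.restrict (Ioo a b)) :=
    (hg'.mono Ioo_subset_Icc_self).aemeasurable measurableSet_Ioo
  have hsplit : ∀ᵐ x ∂volume.restrict (Ioo a b), ENNReal.ofReal |g' x| =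
      ENNReal.ofReal (√(w x)) * ENNReal.ofReal (|g' x| / √(w x)) := by
    filter_upwards [ae_restrict_mem measurableSet_Ioo] with x hx
    rw [← ENNReal.ofReal_mul (sqrt_nonneg _), mul_div_cancel₀ _ (sqrt_pos.2 (hw_pos x hx)).ne']
  have hsq_w : ∀ᵐ x ∂volume.restrict (Ioo a b),
      ENNReal.ofReal (√(w x)) ^ 2 = ENNReal.ofReal (w x) := by
    filter_upwards [ae_restrict_mem measurableSet_Ioo] with x hx
    rw [← ENNReal.ofReal_pow (sqrt_nonneg _), sq_sqrt (hw_pos x hx).le]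
  have hsq_g : ∀ᵐ x ∂volume.restrict (Ioo a b),
      ENNReal.ofReal (|g' x| / √(w x)) ^ 2 = ENNReal.ofReal (g' x ^ 2 / w x) := by
    filter_upwards [ae_restrict_mem measurableSet_Ioo] with x hx
    rw [← ENNReal.ofReal_pow (by positivity), div_pow, sq_abs, sq_sqrt (hw_pos x hx).le]
  calc ENNReal.ofReal ((g b - g a) ^ 2)
      = ENNReal.ofReal |g b - g a| ^ 2 := by rw [← ENNReal.ofReal_pow (abs_nonneg _), sq_abs]
    _ ≤ (∫⁻ x in Ioo a b, ENNReal.ofReal |g' x|) ^ 2 := by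
        rw [setLIntegral_Ioo_ofReal_eq_intervalIntegral hab hg'.abs fun x _ => abs_nonneg _]
        gcongr
    _ = (∫⁻ x in Ioo a b, ENNReal.ofReal (√(w x)) * ENNReal.ofReal (|g' x| / √(w x))) ^ 2 := by
        rw [lintegral_congr_ae hsplit]
    _ ≤ _ := by
        refine (lintegral_mul_sq_le ?_ ?_).trans_eq ?_
        · exact hw.sqrt.ennreal_ofReal.aemeasurable
        · exact (hg'_meas.abs.div hw.sqrt.aemeasurable).ennreal_ofReal
        · rw [lintegral_congr_ae hsq_w, lintegral_congr_ae hsq_g]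

theorem integral_cos_pi_mul (a b : ℝ) :
    ∫ x in a..b, cos (π * x) = (sin (π * b) - sin (π * a)) / π := by
  simp only [intervalIntegral.integral_comp_mul_left (fun x => cos x) pi_ne_zero, integral_cos,
    smul_eq_mul]
  ring

theorem integral_sin_pi_mul (a b : ℝ) :
    ∫ x in a..b, sin (π * x) = (cos (π * a) - cos (π * b)) / π := by
  simp only [intervalIntegral.integral_comp_mul_left (fun x => sin x) pi_ne_zero, integral_sin,
    smul_eq_mul]
  ring

theorem cos_pi_mul_le_cos_pi_mul {t s : ℝ} (ht : 0 ≤ t) (hts : t ≤ s) (hs : s ≤ 1) :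
    cos (π * s) ≤ cos (π * t) :=
  cos_le_cos_of_nonneg_of_le_pi (by positivity) (by nlinarith [pi_pos])
    (by nlinarith [pi_pos])

theorem sin_pi_mul_pos {x : ℝ} (hx : x ∈ Ioo (0 : ℝ) 1) : 0 < sin (π * x) :=
  sin_pos_of_pos_of_lt_pi (by nlinarith [pi_pos, hx.1]) (by nlinarith [pi_pos, hx.2])

theorem setLIntegral_Ioo_sin_pi_mul {a b : ℝ} (ha : 0 ≤ a) (hab : a ≤ b) (hb : b ≤ 1) :
    ∫⁻ x in Ioo a b, ENNReal.ofReal (sin (π * x)) =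
      ENNReal.ofReal ((cos (π * a) - cos (π * b)) / π) := by
  rw [setLIntegral_Ioo_ofReal_eq_intervalIntegral hab (by fun_prop) fun x hx =>
    sin_nonneg_of_nonneg_of_le_pi (by nlinarith [pi_pos, hx.1]) (by nlinarith [pi_pos, hx.2]),
    integral_sin_pi_mul]

-- `(cos (π * t) - cos (π * s)) / π = ∫ y in t..s, sin (π * y)`
noncomputable def poincareKernel (t s x : ℝ) : ℝ≥0∞ :=
  if t < x ∧ x < s then ENNReal.ofReal ((cos (π * t) - cos (π * s)) / π) else 0

@[fun_prop]
theorem Measurable.poincareKernel {α : Type*} [MeasurableSpace α] {t s x : α → ℝ}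
    (ht : Measurable t) (hs : Measurable s) (hx : Measurable x) :
    Measurable fun a => poincareKernel (t a) (s a) (x a) :=
  Measurable.ite ((measurableSet_lt ht hx).inter (measurableSet_lt hx hs)) (by fun_prop)
    measurable_const

theorem integral_cos_sub_cos_pi_mul (t x : ℝ) :
    ∫ s in x..1, (cos (π * t) - cos (π * s)) / π =
      (1 - x) * cos (π * t) / π + sin (π * x) / π ^ 2 := by
  rw [intervalIntegral.integral_div, intervalIntegral.integral_sub intervalIntegrable_const
    ((by fun_prop : Continuous fun s => cos (π * s)).intervalIntegrable _ _),
    integral_cos_pi_mul]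
  simp only [intervalIntegral.integral_const, smul_eq_mul, mul_one, sin_pi, zero_sub]
  field_simp
  ring

theorem setLIntegral_poincareKernel {x : ℝ} (hx : x ∈ Ioo (0 : ℝ) 1) (t : ℝ) :
    ∫⁻ s in Ioo 0 1, poincareKernel t s x =
      (Iio x).indicator (fun t => ∫⁻ s in Ioo x 1,
        ENNReal.ofReal ((cos (π * t) - cos (π * s)) / π)) t := by
  by_cases htx : t < x
  · have hK : ∀ s, poincareKernel t s x = (Ioi x).indicator
        (fun s => ENNReal.ofReal ((cos (π * t) - cos (π * s)) / π)) s := by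
      intro s
      simp [poincareKernel, indicator, htx]
    rw [lintegral_congr hK, indicator_of_mem (mem_Iio.2 htx), lintegral_indicator measurableSet_Ioi,
      Measure.restrict_restrict measurableSet_Ioi, Ioi_inter_Ioo, max_eq_left hx.1.le]
  · simp [poincareKernel, htx]

theorem lintegral_lintegral_poincareKernel {x : ℝ} (hx : x ∈ Ioo (0 : ℝ) 1) :
    ∫⁻ t in Ioo 0 1, ∫⁻ s in Ioo 0 1, poincareKernel t s x =
      ENNReal.ofReal (sin (π * x) / π ^ 2) := by
  have hinner_nonneg : ∀ t ∈ Ioo 0 x, 0 ≤ (1 - x) * cos (π * t) / π + sin (π * x) / π ^ 2 := by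
    intro t ht
    rw [← integral_cos_sub_cos_pi_mul]
    refine intervalIntegral.integral_nonneg hx.2.le fun s hs => div_nonneg ?_ pi_pos.le
    exact sub_nonneg.2 (cos_pi_mul_le_cos_pi_mul ht.1.le (ht.2.le.trans hs.1) hs.2)
  calc ∫⁻ t in Ioo 0 1, ∫⁻ s in Ioo 0 1, poincareKernel t s x
      = ∫⁻ t in Ioo 0 x, ∫⁻ s in Ioo x 1, ENNReal.ofReal ((cos (π * t) - cos (π * s)) / π) := by
        rw [lintegral_congr (setLIntegral_poincareKernel hx), lintegral_indicator measurableSet_Iio,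
          Measure.restrict_restrict measurableSet_Iio, Iio_inter_Ioo, min_eq_left hx.2.le]
    _ = ∫⁻ t in Ioo 0 x, ENNReal.ofReal ((1 - x) * cos (π * t) / π + sin (π * x) / π ^ 2) := by
        refine setLIntegral_congr_fun measurableSet_Ioo fun t ht => ?_
        rw [setLIntegral_Ioo_ofReal_eq_intervalIntegral hx.2.le (by fun_prop) fun s hs => ?_,
          integral_cos_sub_cos_pi_mul]
        exact div_nonneg (sub_nonneg.2 (cos_pi_mul_le_cos_pi_mul ht.1.le
          (ht.2.le.trans hs.1.le) hs.2.le)) pi_pos.le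
    _ = ENNReal.ofReal (sin (π * x) / π ^ 2) := by
        rw [setLIntegral_Ioo_ofReal_eq_intervalIntegral hx.1.le (by fun_prop) hinner_nonneg]
        congr 1
        rw [intervalIntegral.integral_add
          ((by fun_prop : Continuous fun t => (1 - x) * cos (π * t) / π).intervalIntegrable _ _)
          intervalIntegrable_const, intervalIntegral.integral_div,
          intervalIntegral.integral_const_mul, integral_cos_pi_mul]
        simp only [mul_zero, sin_zero, sub_zero, intervalIntegral.integral_div,
          intervalIntegral.integral_const, smul_eq_mul]
        field_simp
        ring

theorem lintegral_lintegral_poincareKernel_add {x : ℝ} (hx : x ∈ Ioo (0 : ℝ) 1) :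
    ∫⁻ s in Ioo 0 1, ∫⁻ t in Ioo 0 1, (poincareKernel t s x + poincareKernel s t x) =
      2 * ENNReal.ofReal (sin (π * x) / π ^ 2) := by
  have hK : Measurable fun p : ℝ × ℝ => poincareKernel p.2 p.1 x := by fun_prop
  have hsplit : ∀ s, ∫⁻ t in Ioo 0 1, (poincareKernel t s x + poincareKernel s t x) =
      (∫⁻ t in Ioo 0 1, poincareKernel t s x) + ∫⁻ t in Ioo 0 1, poincareKernel s t x :=
    fun s => lintegral_add_left (by fun_prop) _
  rw [lintegral_congr hsplit, lintegral_add_left hK.lintegral_prod_right',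
    lintegral_lintegral_swap hK.aemeasurable, lintegral_lintegral_poincareKernel hx, two_mul]

theorem ofReal_sq_sub_le_lintegral_poincareKernel_mul {g g' : ℝ → ℝ}
    (hg : ∀ x ∈ Ioo (0 : ℝ) 1, HasDerivAt g (g' x) x) (hg' : ContinuousOn g' (Ioo 0 1))
    {t s : ℝ} (ht : t ∈ Ioo (0 : ℝ) 1) (hs : s ∈ Ioo (0 : ℝ) 1) (hts : t ≤ s) :
    ENNReal.ofReal ((g s - g t) ^ 2) ≤
      ∫⁻ x in Ioo 0 1, poincareKernel t s x * ENNReal.ofReal (g' x ^ 2 / sin (π * x)) := by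
  have hsub : Icc t s ⊆ Ioo 0 1 := Icc_subset_Ioo ht.1 hs.2
  have hK : ∀ x, poincareKernel t s x * ENNReal.ofReal (g' x ^ 2 / sin (π * x)) =
      (Ioo t s).indicator (fun x => ENNReal.ofReal ((cos (π * t) - cos (π * s)) / π) *
        ENNReal.ofReal (g' x ^ 2 / sin (π * x))) x := by
    intro x
    simp [poincareKernel, indicator, ite_mul]
  rw [lintegral_congr hK, lintegral_indicator measurableSet_Ioo,
    Measure.restrict_restrict measurableSet_Ioo, inter_eq_left.2 (Ioo_subset_Icc_self.trans hsub),
    lintegral_const_mul' _ _ ENNReal.ofReal_ne_top,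
    ← setLIntegral_Ioo_sin_pi_mul ht.1.le hts hs.2.le]
  exact ofReal_sq_sub_le_lintegral_mul hts (fun x hx => hg x (hsub hx)) (hg'.mono hsub)
    (by fun_prop) fun x hx => sin_pi_mul_pos (hsub (Ioo_subset_Icc_self hx))

theorem lintegral_lintegral_sq_sub_le {g g' : ℝ → ℝ}
    (hg : ∀ x ∈ Ioo (0 : ℝ) 1, HasDerivAt g (g' x) x) (hg' : ContinuousOn g' (Ioo 0 1))
    (hg'_meas : Measurable g') :
    ∫⁻ s in Ioo 0 1, ∫⁻ t in Ioo 0 1, ENNReal.ofReal ((g s - g t) ^ 2) ≤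
      ENNReal.ofReal (2 / π ^ 2) * ∫⁻ x in Ioo 0 1, ENNReal.ofReal (g' x ^ 2) := by
  set G : ℝ → ℝ≥0∞ := fun x => ENNReal.ofReal (g' x ^ 2 / sin (π * x))
  have hpair : ∀ s ∈ Ioo (0 : ℝ) 1, ∀ t ∈ Ioo (0 : ℝ) 1, ENNReal.ofReal ((g s - g t) ^ 2) ≤
      ∫⁻ x in Ioo 0 1, (poincareKernel t s x + poincareKernel s t x) * G x := by
    intro s hs t ht
    rcases le_total t s with hts | hst
    · exact (ofReal_sq_sub_le_lintegral_poincareKernel_mul hg hg' ht hs hts).trans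
        (lintegral_mono fun x => by gcongr; exact le_self_add)
    · rw [← neg_sub, neg_sq]
      exact (ofReal_sq_sub_le_lintegral_poincareKernel_mul hg hg' hs ht hst).trans
        (lintegral_mono fun x => by gcongr; exact le_add_self)
  calc ∫⁻ s in Ioo 0 1, ∫⁻ t in Ioo 0 1, ENNReal.ofReal ((g s - g t) ^ 2)
      ≤ ∫⁻ s in Ioo 0 1, ∫⁻ t in Ioo 0 1, ∫⁻ x in Ioo 0 1,
          (poincareKernel t s x + poincareKernel s t x) * G x :=
        setLIntegral_mono' measurableSet_Ioo fun s hs =>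
          setLIntegral_mono' measurableSet_Ioo fun t ht => hpair s hs t ht
    _ = ∫⁻ x in Ioo 0 1, ∫⁻ s in Ioo 0 1, ∫⁻ t in Ioo 0 1,
          (poincareKernel t s x + poincareKernel s t x) * G x :=
        lintegral_lintegral_lintegral_swap (by fun_prop)
    _ = ∫⁻ x in Ioo 0 1, ENNReal.ofReal (2 / π ^ 2) * ENNReal.ofReal (g' x ^ 2) := by
        refine setLIntegral_congr_fun measurableSet_Ioo fun x hx => ?_
        have hsin := sin_pi_mul_pos hx
        rw [lintegral_congr fun s => lintegral_mul_const' _ _ ENNReal.ofReal_ne_top,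
          lintegral_mul_const' _ _ ENNReal.ofReal_ne_top, lintegral_lintegral_poincareKernel_add hx,
          ← ENNReal.ofReal_ofNat 2, ← ENNReal.ofReal_mul zero_le_two,
          ← ENNReal.ofReal_mul (by positivity), ← ENNReal.ofReal_mul (by positivity)]
        congr 1
        field_simp
    _ = ENNReal.ofReal (2 / π ^ 2) * ∫⁻ x in Ioo 0 1, ENNReal.ofReal (g' x ^ 2) :=
        lintegral_const_mul' _ _ ENNReal.ofReal_ne_top

theorem ContinuousOn.measurable_indicator {α γ : Type*} [TopologicalSpace α] [MeasurableSpace α]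
    [OpensMeasurableSpace α] [TopologicalSpace γ] [MeasurableSpace γ] [BorelSpace γ] [Zero γ]
    {f : α → γ} {s : Set α} (hf : ContinuousOn f s) (hs : MeasurableSet s) :
    Measurable (s.indicator f) := by
  classical
  exact hf.measurable_piecewise continuousOn_const hs

def unitCube (ι : Type*) : Set (ι → ℝ) := univ.pi fun _ => Ioo 0 1

theorem isOpen_unitCube (ι : Type*) [Finite ι] : IsOpen (unitCube ι) :=
  isOpen_set_pi finite_univ fun _ _ => isOpen_Ioo

theorem ae_mem_unitCube (ι : Type*) [Fintype ι] :
    ∀ᵐ z ∂Measure.pi (fun _ : ι => volume.restrict (Ioo (0 : ℝ) 1)), z ∈ unitCube ι := by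
  have hcoord : ∀ j, ∀ᵐ z ∂Measure.pi (fun _ : ι => volume.restrict (Ioo (0 : ℝ) 1)),
      z j ∈ Ioo (0 : ℝ) 1 := fun j =>
    Measure.tendsto_eval_ae_ae.eventually (ae_restrict_mem measurableSet_Ioo)
  exact (Filter.eventually_all.2 hcoord).mono fun z hz => mem_univ_pi.2 hz

theorem hasDerivAt_indicator_comp_update {ι : Type*} [Fintype ι] [DecidableEq ι]
    {f : (ι → ℝ) → ℝ} {U : Set (ι → ℝ)} (hU : IsOpen U) (hf : DifferentiableOn ℝ f U)
    {x : ι → ℝ} {i : ι} {s : ℝ} (hs : update x i s ∈ U) :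
    HasDerivAt (fun s => U.indicator f (update x i s))
      (fderiv ℝ f (update x i s) (Pi.single i 1)) s := by
  have hnhds : ∀ᶠ s' in nhds s, update x i s' ∈ U :=
    (continuous_const.update i continuous_id).continuousAt.preimage_mem_nhds (hU.mem_nhds hs)
  exact ((hf.differentiableAt (hU.mem_nhds hs)).hasFDerivAt.comp_hasDerivAt s
    (hasDerivAt_update x i s)).congr_of_eventuallyEq
    (hnhds.mono fun s' hs' => indicator_of_mem hs' f)

section Cube

variable {ι : Type*} [Fintype ι] {f : (ι → ℝ) → ℝ}

theorem continuousOn_fderiv_apply_unitCube [DecidableEq ι] (hf : ContDiffOn ℝ 1 f (unitCube ι))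
    (i : ι) :
    ContinuousOn (fun z => fderiv ℝ f z (Pi.single i 1)) (unitCube ι) :=
  (hf.continuousOn_fderiv_of_isOpen (isOpen_unitCube ι) le_rfl).clm_apply continuousOn_const

theorem lintegral_lintegral_sq_sub_indicator_update_le [DecidableEq ι]
    (hf : ContDiffOn ℝ 1 f (unitCube ι)) (i : ι) (x : ι → ℝ) :
    ∫⁻ s in Ioo 0 1, ∫⁻ t in Ioo 0 1, ENNReal.ofReal
        (((unitCube ι).indicator f (update x i s) - (unitCube ι).indicator f (update x i t)) ^ 2) ≤
      ENNReal.ofReal (2 / π ^ 2) * ∫⁻ s in Ioo 0 1, ENNReal.ofReal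
        ((unitCube ι).indicator (fun z => fderiv ℝ f z (Pi.single i 1)) (update x i s) ^ 2) := by
  by_cases hx : x ∈ (univ \ {i}).pi fun _ => Ioo (0 : ℝ) 1
  · have hmem : ∀ s ∈ Ioo (0 : ℝ) 1, update x i s ∈ unitCube ι := fun s hs =>
      update_mem_pi_iff.2 ⟨hx, fun _ => hs⟩
    refine lintegral_lintegral_sq_sub_le (fun s hs => ?_) ?_
      (((continuousOn_fderiv_apply_unitCube hf i).measurable_indicator
        (isOpen_unitCube ι).measurableSet).comp (measurable_update x))
    · rw [indicator_of_mem (hmem s hs)]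
      exact hasDerivAt_indicator_comp_update (isOpen_unitCube ι)
        (hf.differentiableOn one_ne_zero) (hmem s hs)
    · exact ((continuousOn_fderiv_apply_unitCube hf i).comp
        (continuous_const.update i continuous_id).continuousOn hmem).congr
        fun s hs => indicator_of_mem (hmem s hs) _
  · have hzero : ∀ s, (unitCube ι).indicator f (update x i s) = 0 := fun s =>
      indicator_of_notMem (fun h => hx (update_mem_pi_iff.1 h).1) _
    simp [hzero]

theorem lintegral_lintegral_sq_sub_update_le [DecidableEq ι] (hf : ContDiffOn ℝ 1 f (unitCube ι))
    (i : ι) :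
    ∫⁻ z, (∫⁻ t in Ioo 0 1, ENNReal.ofReal ((f z - f (update z i t)) ^ 2))
        ∂Measure.pi (fun _ => volume.restrict (Ioo (0 : ℝ) 1)) ≤
      ENNReal.ofReal (2 / π ^ 2) * ∫⁻ z, ENNReal.ofReal (fderiv ℝ f z (Pi.single i 1) ^ 2)
        ∂Measure.pi (fun _ => volume.restrict (Ioo (0 : ℝ) 1)) := by
  set μ := Measure.pi fun _ : ι => volume.restrict (Ioo (0 : ℝ) 1)
  -- `f` need not be measurable off the cube, so we pass to its extension by zero
  set F := (unitCube ι).indicator f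
  set D := (unitCube ι).indicator fun z => fderiv ℝ f z (Pi.single i 1)
  calc ∫⁻ z, (∫⁻ t in Ioo 0 1, ENNReal.ofReal ((f z - f (update z i t)) ^ 2)) ∂μ
      = ∫⁻ z, (∫⁻ t in Ioo 0 1, ENNReal.ofReal ((F z - F (update z i t)) ^ 2)) ∂μ := by
        refine lintegral_congr_ae ((ae_mem_unitCube ι).mono fun z hz => ?_)
        refine setLIntegral_congr_fun measurableSet_Ioo fun t ht => ?_
        have hzt : update z i t ∈ unitCube ι := (update_mem_pi_iff_of_mem hz).2 fun _ => ht
        simp only [F, indicator_of_mem hz, indicator_of_mem hzt]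
    _ ≤ ∫⁻ z, ENNReal.ofReal (2 / π ^ 2) * ENNReal.ofReal (D z ^ 2) ∂μ := by
        have hF := hf.continuousOn.measurable_indicator (isOpen_unitCube ι).measurableSet
        have hD := (continuousOn_fderiv_apply_unitCube hf i).measurable_indicator
          (isOpen_unitCube ι).measurableSet
        refine lintegral_le_of_lmarginal_le {i} ?_
          ((hD.pow_const 2).ennreal_ofReal.const_mul _) fun x => ?_
        · exact Measurable.lintegral_prod_right' (((hF.comp measurable_fst).sub
            (hF.comp measurable_update')).pow_const 2).ennreal_ofReal
        simp only [lmarginal_singleton, update_idem]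
        rw [lintegral_const_mul' _ _ ENNReal.ofReal_ne_top]
        exact lintegral_lintegral_sq_sub_indicator_update_le hf i x
    _ = ENNReal.ofReal (2 / π ^ 2) *
          ∫⁻ z, ENNReal.ofReal (fderiv ℝ f z (Pi.single i 1) ^ 2) ∂μ := by
        rw [lintegral_const_mul' _ _ ENNReal.ofReal_ne_top]
        exact congrArg _ (lintegral_congr_ae ((ae_mem_unitCube ι).mono fun z hz => by
          simp only [D, indicator_of_mem hz]))

end Cube

theorem stmt_12_general {d : ℕ} (f : (Fin d → ℝ) → ℝ)
    (μ : Measure (Fin d → ℝ))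
    (hμ : μ = Measure.pi fun _ : Fin d => volume.restrict (Set.Ioo (0:ℝ) 1))
    (hsmooth : ContDiffOn ℝ 1 f (Set.univ.pi fun _ : Fin d => Set.Ioo (0:ℝ) 1))
    (hgrad : ∀ j : Fin d, MemLp (fun z => fderiv ℝ f z (Pi.single j 1)) 2 μ)
    (σ2 : ℝ)
    (hσpos : 0 < σ2)
    (i : Fin d) (vi : ℝ)
    (hv : vi = ∫ z, (fderiv ℝ f z (Pi.single i 1))^2 ∂μ) :
    (1 / (2 * σ2)) * ∫ z, (∫ t in Set.Ioo (0:ℝ) 1, (f z - f (Function.update z i t))^2) ∂μ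
      ≤ vi / (π^2 * σ2) := by
  have hvi : ENNReal.ofReal vi = ∫⁻ z, ENNReal.ofReal (fderiv ℝ f z (Pi.single i 1) ^ 2) ∂μ := by
    rw [hv, ofReal_integral_eq_lintegral_ofReal (hgrad i).integrable_sq
      (Filter.Eventually.of_forall fun z => sq_nonneg _)]
  have hvi_nonneg : 0 ≤ vi := hv ▸ integral_nonneg fun z => sq_nonneg _
  have hL : ∫ z, (∫ t in Ioo 0 1, (f z - f (update z i t)) ^ 2) ∂μ ≤ 2 * vi / π ^ 2 := by
    rw [← ENNReal.ofReal_le_ofReal_iff (by positivity)]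
    calc ENNReal.ofReal (∫ z, (∫ t in Ioo 0 1, (f z - f (update z i t)) ^ 2) ∂μ)
        ≤ ∫⁻ z, (∫⁻ t in Ioo 0 1, ENNReal.ofReal ((f z - f (update z i t)) ^ 2)) ∂μ :=
          (ofReal_integral_le_lintegral_ofReal _).trans
            (lintegral_mono fun z => ofReal_integral_le_lintegral_ofReal _)
      _ ≤ ENNReal.ofReal (2 / π ^ 2) * ENNReal.ofReal vi := by
          rw [hvi, hμ]
          exact lintegral_lintegral_sq_sub_update_le hsmooth i
      _ = ENNReal.ofReal (2 * vi / π ^ 2) := by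
          rw [← ENNReal.ofReal_mul (by positivity)]
          ring_nf
  calc (1 / (2 * σ2)) * ∫ z, (∫ t in Ioo 0 1, (f z - f (update z i t)) ^ 2) ∂μ
      ≤ (1 / (2 * σ2)) * (2 * vi / π ^ 2) := by gcongr
    _ = vi / (π ^ 2 * σ2) := by field_simp

/-- Sobol'–Kucherenko DGSM bound on the unit cube: `S̄ᵢ ≤ vᵢ/(π²σ²)`. -/
theorem stmt_12 {d : ℕ} (f : (Fin d → ℝ) → ℝ)
    (μ : Measure (Fin d → ℝ))
    (hμ : μ = Measure.pi fun _ : Fin d => volume.restrict (Set.Ioo (0:ℝ) 1))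
    (hsmooth : ContDiffOn ℝ 1 f (Set.univ.pi fun _ : Fin d => Set.Ioo (0:ℝ) 1))
    (hgrad : ∀ j : Fin d, MemLp (fun z => fderiv ℝ f z (Pi.single j 1)) 2 μ)
    (σ2 : ℝ)
    (hσ : σ2 = (∫ z, (f z)^2 ∂μ) - (∫ z, f z ∂μ)^2)
    (hσpos : 0 < σ2)
    (i : Fin d) (vi : ℝ)
    (hv : vi = ∫ z, (fderiv ℝ f z (Pi.single i 1))^2 ∂μ) :
    (1 / (2 * σ2)) * ∫ z, (∫ t in Set.Ioo (0:ℝ) 1, (f z - f (Function.update z i t))^2) ∂μ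
      ≤ vi / (π^2 * σ2) :=
  stmt_12_general f μ hμ hsmooth hgrad σ2 hσpos i vi hv
end
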